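/- Fix 0 ≤ m < n and a real J_ave with J_{ave,m} ≤ J_ave < J_{ave,m+1}. Then the constrained game with jammer average-power budget J_ave has a Nash equilibrium whose value is V = ((J_{m+1} − J_ave)/(J_{m+1} − J_{ave,m}))·Z_m. Explicitly, with x̂_i = Z_m·(J_{i+1} − J_i)/((J_{m+1} − J_{ave,m})·Z_i) for 0 ≤ i ≤ m, x̂_i = 0 for i > m, and ŷ as follows — a = (J_{m+1} − J_ave)/(J_{m+1} − J_{ave,m}), ŷ_0 = a·Z_m/Z_0, ŷ_j = a·Z_m·(Z_j^{−1} − Z_{j−1}^{−1}) for 1 ≤ j ≤ m, ŷ_{m+1} = (J_ave − J_{ave,m})/(J_{m+1} − J_{ave,m}), ŷ_j = 0 for j > m+1 — one has ŷ ∈ Y_LE(J_ave), x̂ᵀZŷ = V, xᵀZŷ ≤ V for every mixed strategy x, and x̂ᵀZy ≥ V for every y ∈ Y_LE(J_ave). -/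

import Mathlib

open Finset

/-- A mixed strategy on `{0, …, n}`: nonnegative entries summing to 1. -/
def IsMixed (n : ℕ) (x : ℕ → ℝ) : Prop :=
  (∀ i ∈ Finset.range (n + 1), 0 ≤ x i) ∧ ∑ i ∈ Finset.range (n + 1), x i = 1

/-- Expected payoff `xᵀ Z y` for the lower-triangular payoff matrix `Z(i,j) = Zᵢ` if `j ≤ i`,
`0` otherwise. -/
noncomputable def pay (n : ℕ) (Z : ℕ → ℝ) (x y : ℕ → ℝ) : ℝ :=
  ∑ i ∈ Finset.range (n + 1), ∑ j ∈ Finset.range (n + 1),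
    x i * (if j ≤ i then Z i else 0) * y j

/-- The average jamming power of the strategy `y`. -/
noncomputable def avgPow (n : ℕ) (J y : ℕ → ℝ) : ℝ :=
  ∑ j ∈ Finset.range (n + 1), y j * J j

/-- The jammer's feasible set: mixed strategies of average power at most `Jave`. -/
def YLE (n : ℕ) (J : ℕ → ℝ) (Jave : ℝ) (y : ℕ → ℝ) : Prop :=
  IsMixed n y ∧ avgPow n J y ≤ Jave

/-- The critical average jamming power `J_{ave,m} = Z_m ∑_{j=1}^m (Z_j⁻¹ - Z_{j-1}⁻¹) J_j`. -/
noncomputable def JaveM (m : ℕ) (J Z : ℕ → ℝ) : ℝ :=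
  Z m * ∑ j ∈ Finset.Icc 1 m, ((Z j)⁻¹ - (Z (j - 1))⁻¹) * J j

/-
Write `S_i(y) = y_0 + ⋯ + y_i`; the payoff is `xᵀZy = ∑ᵢ xᵢ Zᵢ Sᵢ(y)`. The jammer strategy `ŷ`
makes `Zᵢ Sᵢ(ŷ) = V` for `i ≤ m` and `Zᵢ Sᵢ(ŷ) = Zᵢ ≤ Z_{m+1} < V` for `i > m` (the last
inequality is `J_ave < J_{ave,m+1}`), so no transmitter strategy earns more than `V` against `ŷ`.
Against `x̂`, Abel summation turns the payoff into
`Z_m / (J_{m+1} - J_{ave,m}) · ∑_{j ≤ m} y_j (J_{m+1} - J_j)`; adding the nonpositive terms `j > m`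
shows that this is at least `Z_m (J_{m+1} - J_ave) / (J_{m+1} - J_{ave,m}) = V` whenever the
average power of `y` is at most `J_ave`. The two bounds meet at `(x̂, ŷ)`.
-/

lemma pay_eq_sum_mul_sum_range (n : ℕ) (Z x y : ℕ → ℝ) :
    pay n Z x y = ∑ i ∈ range (n + 1), x i * Z i * ∑ j ∈ range (i + 1), y j := by
  refine sum_congr rfl fun i hi => ?_
  have hfilter : (range (n + 1)).filter (· ≤ i) = range (i + 1) := by
    ext j; simp only [mem_filter, mem_range] at hi ⊢; omega
  simp only [mul_ite, ite_mul, mul_zero, zero_mul, ← sum_filter, hfilter, mul_sum]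

lemma pay_le_of_forall_mul_sum_range_le {n : ℕ} {Z x y : ℕ → ℝ} {V : ℝ} (hx : IsMixed n x)
    (hV : ∀ i ≤ n, Z i * ∑ j ∈ range (i + 1), y j ≤ V) : pay n Z x y ≤ V := by
  rw [pay_eq_sum_mul_sum_range]
  calc ∑ i ∈ range (n + 1), x i * Z i * ∑ j ∈ range (i + 1), y j
      ≤ ∑ i ∈ range (n + 1), x i * V := by
        refine sum_le_sum fun i hi => ?_
        rw [mul_assoc]
        exact mul_le_mul_of_nonneg_left (hV i (Nat.lt_succ_iff.1 (mem_range.1 hi))) (hx.1 i hi)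
    _ = V := by rw [← sum_mul, hx.2, one_mul]

lemma sum_range_sub_mul_sum_range (J y : ℕ → ℝ) (m : ℕ) :
    ∑ i ∈ range (m + 1), (J (i + 1) - J i) * ∑ j ∈ range (i + 1), y j
      = ∑ j ∈ range (m + 1), y j * (J (m + 1) - J j) := by
  induction m with
  | zero => simp [mul_comm]
  | succ k ih =>
    rw [sum_range_succ, ih, sum_range_succ y, mul_add, mul_sum, ← add_assoc, ← sum_add_distrib,
      sum_range_succ (fun j => y j * _)]
    congr 1
    · exact sum_congr rfl fun j _ => by ring
    · ring

lemma sub_le_sum_range_mul_sub {n k : ℕ} {J y : ℕ → ℝ} {Jave : ℝ}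
    (hJ : MonotoneOn J (Set.Iic n)) (hk : k ≤ n) (hy : YLE n J Jave y) :
    J k - Jave ≤ ∑ j ∈ range k, y j * (J k - J j) := by
  obtain ⟨⟨hy_nonneg, hy_sum⟩, hy_pow⟩ := hy
  have htail : ∑ j ∈ Ico k (n + 1), y j * (J k - J j) ≤ 0 := by
    refine sum_nonpos fun j hj => ?_
    obtain ⟨hkj, hjn⟩ := mem_Ico.1 hj
    have hJkj : J k ≤ J j := hJ (Set.mem_Iic.2 hk) (Set.mem_Iic.2 (by omega)) hkj
    exact mul_nonpos_of_nonneg_of_nonpos (hy_nonneg j (mem_range.2 hjn)) (by linarith)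
  have hall : ∑ j ∈ range (n + 1), y j * (J k - J j) = J k - avgPow n J y := by
    simp only [avgPow, mul_sub, sum_sub_distrib, ← sum_mul, hy_sum, one_mul]
  rw [← sum_range_add_sum_Ico _ (by omega : k ≤ n + 1)] at hall
  linarith

lemma sum_range_sub_div_eq {J : ℕ → ℝ} (hJ0 : J 0 = 0) (Z : ℕ → ℝ) (m : ℕ) :
    ∑ i ∈ range (m + 1), (J (i + 1) - J i) / Z i
      = J (m + 1) / Z m - ∑ j ∈ Icc 1 m, ((Z j)⁻¹ - (Z (j - 1))⁻¹) * J j := by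
  induction m with
  | zero => simp [hJ0]
  | succ k ih =>
    rw [sum_range_succ, ih, sum_Icc_succ_top (by omega), Nat.add_sub_cancel]
    ring

lemma sub_javeM_eq {J : ℕ → ℝ} (hJ0 : J 0 = 0) {Z : ℕ → ℝ} {m : ℕ} (hZ : Z m ≠ 0) :
    J (m + 1) - JaveM m J Z = Z m * ∑ i ∈ range (m + 1), (J (i + 1) - J i) / Z i := by
  rw [sum_range_sub_div_eq hJ0, JaveM]
  field_simp

lemma mul_sub_javeM_succ (J : ℕ → ℝ) {Z : ℕ → ℝ} {m : ℕ} (hZ : Z m ≠ 0)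
    (hZ' : Z (m + 1) ≠ 0) :
    Z m * (J (m + 1) - JaveM (m + 1) J Z) = Z (m + 1) * (J (m + 1) - JaveM m J Z) := by
  rw [JaveM, JaveM, sum_Icc_succ_top (by omega), Nat.add_sub_cancel]
  field_simp
  ring

noncomputable def xHat (m : ℕ) (J Z : ℕ → ℝ) (i : ℕ) : ℝ :=
  if i ≤ m then Z m * (J (i + 1) - J i) / ((J (m + 1) - JaveM m J Z) * Z i) else 0

/-- The factor `a` of the paper; the value of the game is `a · Z_m`. -/
noncomputable def yHatScale (m : ℕ) (J Z : ℕ → ℝ) (Jave : ℝ) : ℝ :=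
  (J (m + 1) - Jave) / (J (m + 1) - JaveM m J Z)

noncomputable def yHat (m : ℕ) (J Z : ℕ → ℝ) (Jave : ℝ) (j : ℕ) : ℝ :=
  if j = 0 then yHatScale m J Z Jave * Z m / Z 0
  else if j ≤ m then yHatScale m J Z Jave * Z m * ((Z j)⁻¹ - (Z (j - 1))⁻¹)
  else if j = m + 1 then (Jave - JaveM m J Z) / (J (m + 1) - JaveM m J Z)
  else 0

lemma sum_range_yHat_of_le (m : ℕ) (J Z : ℕ → ℝ) (Jave : ℝ) {i : ℕ} (hi : i ≤ m) :
    ∑ j ∈ range (i + 1), yHat m J Z Jave j = yHatScale m J Z Jave * Z m / Z i := by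
  induction i with
  | zero => rw [sum_range_one, yHat, if_pos rfl]
  | succ k ih =>
    rw [sum_range_succ, ih (by omega), yHat, if_neg (by omega), if_pos hi, Nat.add_sub_cancel]
    ring

lemma sum_range_yHat_of_lt {m : ℕ} {J Z : ℕ → ℝ} (Jave : ℝ) (hZ : Z m ≠ 0)
    (hgap : J (m + 1) - JaveM m J Z ≠ 0) {i : ℕ} (hi : m < i) :
    ∑ j ∈ range (i + 1), yHat m J Z Jave j = 1 := by
  have hvanish : ∀ j ∈ range (i + 1), j ∉ range (m + 2) → yHat m J Z Jave j = 0 :=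
    fun j _ hj => by
      simp only [mem_range, not_lt] at hj
      rw [yHat, if_neg (by omega), if_neg (by omega), if_neg (by omega)]
  rw [← sum_subset (range_subset_range.2 (by omega)) hvanish, sum_range_succ,
    sum_range_yHat_of_le m J Z Jave le_rfl, yHat, if_neg (by omega), if_neg (by omega),
    if_pos rfl, mul_div_assoc, div_self hZ, mul_one, yHatScale, ← add_div, div_eq_one_iff_eq hgap]
  ring

structure JammingGame (n : ℕ) (J Z : ℕ → ℝ) : Prop where
  J_zero : J 0 = 0
  J_lt_succ : ∀ j < n, J j < J (j + 1)
  Z_succ_lt : ∀ j < n, Z (j + 1) < Z j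
  Z_pos : 0 < Z n

namespace JammingGame

variable {n m : ℕ} {J Z : ℕ → ℝ}

lemma monotoneOn_J (h : JammingGame n J Z) : MonotoneOn J (Set.Iic n) :=
  monotoneOn_of_le_succ Set.ordConnected_Iic fun j _ _ hj => by
    rw [Order.succ_eq_add_one, Set.mem_Iic] at *
    exact (h.J_lt_succ j (by omega)).le

lemma antitoneOn_Z (h : JammingGame n J Z) : AntitoneOn Z (Set.Iic n) :=
  antitoneOn_of_succ_le Set.ordConnected_Iic fun j _ _ hj => by
    rw [Order.succ_eq_add_one, Set.mem_Iic] at *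
    exact (h.Z_succ_lt j (by omega)).le

lemma Z_pos_of_le (h : JammingGame n J Z) {i : ℕ} (hi : i ≤ n) : 0 < Z i :=
  h.Z_pos.trans_le (h.antitoneOn_Z (Set.mem_Iic.2 hi) Set.self_mem_Iic hi)

lemma sub_javeM_pos (h : JammingGame n J Z) (hm : m < n) : 0 < J (m + 1) - JaveM m J Z := by
  rw [sub_javeM_eq h.J_zero (h.Z_pos_of_le hm.le).ne']
  refine mul_pos (h.Z_pos_of_le hm.le) (sum_pos (fun i hi => ?_) nonempty_range_add_one)
  have hi : i ≤ m := Nat.lt_succ_iff.1 (mem_range.1 hi)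
  exact div_pos (sub_pos.2 (h.J_lt_succ i (by omega))) (h.Z_pos_of_le (by omega))

lemma xHat_mul_Z (h : JammingGame n J Z) (hm : m < n) {i : ℕ} (hi : i ≤ m) :
    xHat m J Z i * Z i = Z m / (J (m + 1) - JaveM m J Z) * (J (i + 1) - J i) := by
  have hZi := (h.Z_pos_of_le (hi.trans hm.le)).ne'
  rw [xHat, if_pos hi]
  field_simp

lemma isMixed_xHat (h : JammingGame n J Z) (hm : m < n) : IsMixed n (xHat m J Z) := by
  have hgap := h.sub_javeM_pos hm
  refine ⟨fun i hi => ?_, ?_⟩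
  · unfold xHat
    split_ifs with him
    · have hJi := h.J_lt_succ i (by omega)
      exact div_nonneg (mul_nonneg (h.Z_pos_of_le hm.le).le (by linarith))
        (mul_pos hgap (h.Z_pos_of_le (by omega))).le
    · exact le_rfl
  · have hvanish : ∀ i ∈ range (n + 1), i ∉ range (m + 1) → xHat m J Z i = 0 :=
      fun i _ hi => if_neg (by simpa using hi)
    have hterm : ∀ i ∈ range (m + 1),
        xHat m J Z i = Z m / (J (m + 1) - JaveM m J Z) * ((J (i + 1) - J i) / Z i) := by
      intro i hi
      have hi : i ≤ m := Nat.lt_succ_iff.1 (mem_range.1 hi)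
      have hZi := (h.Z_pos_of_le (hi.trans hm.le)).ne'
      rw [xHat, if_pos hi]
      field_simp
    rw [← sum_subset (range_subset_range.2 (by omega)) hvanish, sum_congr rfl hterm, ← mul_sum,
      div_mul_eq_mul_div, ← sub_javeM_eq h.J_zero (h.Z_pos_of_le hm.le).ne', div_self hgap.ne']

lemma pay_xHat (h : JammingGame n J Z) (hm : m < n) (y : ℕ → ℝ) :
    pay n Z (xHat m J Z) y
      = Z m / (J (m + 1) - JaveM m J Z) * ∑ j ∈ range (m + 1), y j * (J (m + 1) - J j) := by
  have hvanish : ∀ i ∈ range (n + 1), i ∉ range (m + 1) →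
      xHat m J Z i * Z i * ∑ j ∈ range (i + 1), y j = 0 :=
    fun i _ hi => by rw [xHat, if_neg (by simpa using hi), zero_mul, zero_mul]
  rw [pay_eq_sum_mul_sum_range, ← sum_subset (range_subset_range.2 (by omega)) hvanish,
    ← sum_range_sub_mul_sum_range, mul_sum]
  exact sum_congr rfl fun i hi => by
    rw [h.xHat_mul_Z hm (Nat.lt_succ_iff.1 (mem_range.1 hi)), mul_assoc]

lemma yHatScale_mul_le_pay_xHat (h : JammingGame n J Z) (hm : m < n) {Jave : ℝ} {y : ℕ → ℝ}
    (hy : YLE n J Jave y) : yHatScale m J Z Jave * Z m ≤ pay n Z (xHat m J Z) y := by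
  have hgap := h.sub_javeM_pos hm
  rw [h.pay_xHat hm, yHatScale, div_mul_comm]
  exact mul_le_mul_of_nonneg_left (sub_le_sum_range_mul_sub h.monotoneOn_J hm hy)
    (div_nonneg (h.Z_pos_of_le hm.le).le hgap.le)

lemma Z_succ_lt_yHatScale_mul (h : JammingGame n J Z) (hm : m < n) {Jave : ℝ}
    (hJave : Jave < JaveM (m + 1) J Z) : Z (m + 1) < yHatScale m J Z Jave * Z m := by
  have hZm := h.Z_pos_of_le hm.le
  have hgap := h.sub_javeM_pos hm
  have hsucc := mul_sub_javeM_succ J hZm.ne' (h.Z_pos_of_le hm).ne'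
  rw [yHatScale, div_mul_eq_mul_div, lt_div_iff₀ hgap, ← hsucc]
  nlinarith

lemma yHatScale_pos (h : JammingGame n J Z) (hm : m < n) {Jave : ℝ}
    (hJave : Jave < JaveM (m + 1) J Z) : 0 < yHatScale m J Z Jave :=
  pos_of_mul_pos_left ((h.Z_pos_of_le hm).trans (h.Z_succ_lt_yHatScale_mul hm hJave))
    (h.Z_pos_of_le hm.le).le

lemma yHat_nonneg (h : JammingGame n J Z) (hm : m < n) {Jave : ℝ}
    (hJave₁ : JaveM m J Z ≤ Jave) (hJave₂ : Jave < JaveM (m + 1) J Z) (j : ℕ) :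
    0 ≤ yHat m J Z Jave j := by
  have hscale := (h.yHatScale_pos hm hJave₂).le
  have hZm := (h.Z_pos_of_le hm.le).le
  unfold yHat
  split_ifs with hj0 hjm hjm1
  · exact div_nonneg (mul_nonneg hscale hZm) (h.Z_pos_of_le (Nat.zero_le n)).le
  · have hZj := h.Z_pos_of_le (hjm.trans hm.le)
    have hZle := h.antitoneOn_Z (Set.mem_Iic.2 (by omega)) (Set.mem_Iic.2 (by omega))
      (Nat.sub_le j 1)
    exact mul_nonneg (mul_nonneg hscale hZm) (sub_nonneg.2 (inv_anti₀ hZj hZle))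
  · exact div_nonneg (sub_nonneg.2 hJave₁) (h.sub_javeM_pos hm).le
  · exact le_rfl

lemma avgPow_yHat (h : JammingGame n J Z) (hm : m < n) (Jave : ℝ) :
    avgPow n J (yHat m J Z Jave) = Jave := by
  have hgap := (h.sub_javeM_pos hm).ne'
  have hvanish : ∀ j ∈ range (n + 1), j ∉ range (m + 2) → yHat m J Z Jave j * J j = 0 :=
    fun j _ hj => by
      simp only [mem_range, not_lt] at hj
      rw [yHat, if_neg (by omega), if_neg (by omega), if_neg (by omega), zero_mul]
  have hlow : ∑ j ∈ range (m + 1), yHat m J Z Jave j * J j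
      = yHatScale m J Z Jave * JaveM m J Z := by
    rw [range_eq_Ico, sum_eq_sum_Ico_succ_bot (by omega), Ico_add_one_right_eq_Icc, h.J_zero,
      mul_zero, zero_add, JaveM, ← mul_assoc, mul_sum]
    refine sum_congr rfl fun j hj => ?_
    obtain ⟨hj1, hjm⟩ := mem_Icc.1 hj
    rw [yHat, if_neg (by omega), if_pos hjm, mul_assoc]
  rw [avgPow, ← sum_subset (range_subset_range.2 (by omega)) hvanish, sum_range_succ, hlow,
    yHat, if_neg (by omega), if_neg (by omega), if_pos rfl, yHatScale]
  field_simp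
  ring

lemma yle_yHat (h : JammingGame n J Z) (hm : m < n) {Jave : ℝ}
    (hJave₁ : JaveM m J Z ≤ Jave) (hJave₂ : Jave < JaveM (m + 1) J Z) :
    YLE n J Jave (yHat m J Z Jave) :=
  ⟨⟨fun j _ => h.yHat_nonneg hm hJave₁ hJave₂ j,
    sum_range_yHat_of_lt Jave (h.Z_pos_of_le hm.le).ne' (h.sub_javeM_pos hm).ne' hm⟩,
    (h.avgPow_yHat hm Jave).le⟩

lemma pay_yHat_le (h : JammingGame n J Z) (hm : m < n) {Jave : ℝ}
    (hJave : Jave < JaveM (m + 1) J Z) {x : ℕ → ℝ} (hx : IsMixed n x) :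
    pay n Z x (yHat m J Z Jave) ≤ yHatScale m J Z Jave * Z m := by
  have hZm := h.Z_pos_of_le hm.le
  refine pay_le_of_forall_mul_sum_range_le hx fun i hi => ?_
  rcases le_or_gt i m with him | hmi
  · rw [sum_range_yHat_of_le m J Z Jave him, mul_div_cancel₀ _ (h.Z_pos_of_le hi).ne']
  · rw [sum_range_yHat_of_lt Jave hZm.ne' (h.sub_javeM_pos hm).ne' hmi, mul_one]
    exact (h.antitoneOn_Z (Set.mem_Iic.2 hm) (Set.mem_Iic.2 hi) hmi).trans_lt
      (h.Z_succ_lt_yHatScale_mul hm hJave) |>.le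

end JammingGame

theorem stmt_9_general (n : ℕ) (J Z : ℕ → ℝ)
    (hJ0 : J 0 = 0) (hJmono : ∀ j < n, J j < J (j + 1))
    (hZanti : ∀ j < n, Z (j + 1) < Z j) (hZpos : 0 < Z n)
    (m : ℕ) (hm : m < n) (Jave : ℝ)
    (hJave1 : JaveM m J Z ≤ Jave) (hJave2 : Jave < JaveM (m + 1) J Z)
    (V a : ℝ)
    (hV : V = (J (m + 1) - Jave) / (J (m + 1) - JaveM m J Z) * Z m)
    (ha : a = (J (m + 1) - Jave) / (J (m + 1) - JaveM m J Z))
    (xhat yhat : ℕ → ℝ)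
    (hx : ∀ i, xhat i = if i ≤ m then
      Z m * (J (i + 1) - J i) / ((J (m + 1) - JaveM m J Z) * Z i) else 0)
    (hy : ∀ j, yhat j = if j = 0 then a * Z m / Z 0
      else if j ≤ m then a * Z m * ((Z j)⁻¹ - (Z (j - 1))⁻¹)
      else if j = m + 1 then (Jave - JaveM m J Z) / (J (m + 1) - JaveM m J Z)
      else 0) :
    IsMixed n xhat ∧
    YLE n J Jave yhat ∧
    pay n Z xhat yhat = V ∧
    (∀ x : ℕ → ℝ, IsMixed n x → pay n Z x yhat ≤ V) ∧
    (∀ y : ℕ → ℝ, YLE n J Jave y → V ≤ pay n Z xhat y) := by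
  have h : JammingGame n J Z := ⟨hJ0, hJmono, hZanti, hZpos⟩
  subst hV ha
  obtain rfl : xhat = xHat m J Z := funext hx
  obtain rfl : yhat = yHat m J Z Jave := funext hy
  have hx_mixed := h.isMixed_xHat hm
  have hy_feasible := h.yle_yHat hm hJave1 hJave2
  have upper (x : ℕ → ℝ) (hx : IsMixed n x) := h.pay_yHat_le hm hJave2 hx
  have lower (y : ℕ → ℝ) (hy : YLE n J Jave y) := h.yHatScale_mul_le_pay_xHat hm hy
  exact ⟨hx_mixed, hy_feasible, (upper _ hx_mixed).antisymm (lower _ hy_feasible), upper, lower⟩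

/-- for `0 ≤ m < n` and `J_{ave,m} ≤ J_ave < J_{ave,m+1}`, the constrained game
with budget `J_ave` has the Nash equilibrium `(x̂, ŷ)` whose value is
`V = ((J_{m+1} - J_ave)/(J_{m+1} - J_{ave,m})) Z_m`. -/
theorem stmt_9 (n : ℕ) (hn : 1 ≤ n) (J Z : ℕ → ℝ)
    (hJ0 : J 0 = 0) (hJmono : ∀ j < n, J j < J (j + 1))
    (hZanti : ∀ j < n, Z (j + 1) < Z j) (hZpos : 0 < Z n)
    (m : ℕ) (hm : m < n) (Jave : ℝ)
    (hJave1 : JaveM m J Z ≤ Jave) (hJave2 : Jave < JaveM (m + 1) J Z)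
    (V a : ℝ)
    (hV : V = (J (m + 1) - Jave) / (J (m + 1) - JaveM m J Z) * Z m)
    (ha : a = (J (m + 1) - Jave) / (J (m + 1) - JaveM m J Z))
    (xhat yhat : ℕ → ℝ)
    (hx : ∀ i, xhat i = if i ≤ m then
      Z m * (J (i + 1) - J i) / ((J (m + 1) - JaveM m J Z) * Z i) else 0)
    (hy : ∀ j, yhat j = if j = 0 then a * Z m / Z 0
      else if j ≤ m then a * Z m * ((Z j)⁻¹ - (Z (j - 1))⁻¹)
      else if j = m + 1 then (Jave - JaveM m J Z) / (J (m + 1) - JaveM m J Z)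
      else 0) :
    IsMixed n xhat ∧
    YLE n J Jave yhat ∧
    pay n Z xhat yhat = V ∧
    (∀ x : ℕ → ℝ, IsMixed n x → pay n Z x yhat ≤ V) ∧
    (∀ y : ℕ → ℝ, YLE n J Jave y → V ≤ pay n Z xhat y) :=
  stmt_9_general n J Z hJ0 hJmono hZanti hZpos m hm Jave hJave1 hJave2 V a hV ha xhat yhat hx hy
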